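/- Let φ be the anti-automorphism of H_n(0) determined by φ(T_i) = T_i for all i. Then for every permutation τ ∈ S_n (used as the word of spectral parameters) and every σ ∈ S_n, one has φ(Y_σ(τ)) = Y_{σ^{-1}}( \overline{τ}^{\#} · (σ^{-1})^{\#} ), where for a permutation π, \overline{π} := π ω_n, π^{\#} := ω_n π, ω_n = (n, n-1, …, 1) is the longest permutation, and the products are compositions of permutations. -/

import Mathlib

/-!
STATEMENT 3: Let `φ` be the anti-automorphism of `H_n(0)` determined by
`φ(T_i) = T_i` for all `i`.  Then for every permutation `τ ∈ S_n` (used as the word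
of spectral parameters) and every `σ ∈ S_n`, one has
`φ(Y_σ(τ)) = Y_{σ⁻¹}( ‾τ^# · (σ⁻¹)^# )`,
where `‾π := π ω_n`, `π^# := ω_n π`, and `ω_n = (n, n-1, …, 1)` is the longest
permutation (`Fin.revPerm`).

An anti-automorphism is encoded as a `ℂ`-algebra morphism `H_n(0) →ₐ[ℂ] H_n(0)ᵐᵒᵖ`;
the Yang-Baxter basis is encoded by quantifying over any family `Y` satisfying its
defining recursion (`IsYBFamily`), which determines it uniquely.
-/

namespace AKSPaper

noncomputable section

/-- Defining relations of the 0-Hecke algebra `H_n(0)`.  The generator indexed by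
`i : Fin (n-1)` is `T_{i+1}` (1-indexed), acting on 0-indexed positions `i, i+1`. -/
inductive HeckeRel (n : ℕ) :
    FreeAlgebra ℂ (Fin (n - 1)) → FreeAlgebra ℂ (Fin (n - 1)) → Prop
  | quad (i : Fin (n - 1)) :
      HeckeRel n (FreeAlgebra.ι ℂ i * (1 + FreeAlgebra.ι ℂ i)) 0
  | braid (i j : Fin (n - 1)) (h : (i : ℕ) + 1 = j) :
      HeckeRel n (FreeAlgebra.ι ℂ i * FreeAlgebra.ι ℂ j * FreeAlgebra.ι ℂ i)
        (FreeAlgebra.ι ℂ j * FreeAlgebra.ι ℂ i * FreeAlgebra.ι ℂ j)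
  | comm (i j : Fin (n - 1)) (h : (i : ℕ) + 2 ≤ j ∨ (j : ℕ) + 2 ≤ i) :
      HeckeRel n (FreeAlgebra.ι ℂ i * FreeAlgebra.ι ℂ j)
        (FreeAlgebra.ι ℂ j * FreeAlgebra.ι ℂ i)

/-- The 0-Hecke algebra `H_n(0)`. -/
abbrev H (n : ℕ) := RingQuot (HeckeRel n)

/-- The generator `T_{i+1}` of `H_n(0)`. -/
def Tgen {n : ℕ} (i : Fin (n - 1)) : H n :=
  RingQuot.mkAlgHom ℂ (HeckeRel n) (FreeAlgebra.ι ℂ i)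

/-- The generator `T` acting on the 0-indexed positions `j`, `j+1`. -/
def Tpos {n : ℕ} (j : ℕ) (h : j + 1 < n) : H n := Tgen ⟨j, by omega⟩

/-- The elementary transposition exchanging the 0-indexed positions `j`, `j+1`. -/
def sw {n : ℕ} (j : ℕ) (h : j + 1 < n) : Equiv.Perm (Fin n) :=
  Equiv.swap ⟨j, by omega⟩ ⟨j + 1, h⟩

/-- The number of inversions of a permutation. -/
def invnum {n : ℕ} (σ : Equiv.Perm (Fin n)) : ℕ :=
  (Finset.univ.filter fun p : Fin n × Fin n => p.1 < p.2 ∧ σ p.2 < σ p.1).card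

/-- The Yang-Baxter element `Y_j(t, u)`: `T_j` if `t > u`, `1 + T_j` if `t ≤ u`. -/
def Ygen {n : ℕ} {α : Type*} [LinearOrder α] (j : ℕ) (h : j + 1 < n) (t u : α) : H n :=
  if t ≤ u then 1 + Tpos j h else Tpos j h

/-- `Y` is the family of Yang-Baxter basis elements: `Y_id(x) = 1` and
`Y_{s_j τ}(x) = Y_j(x_{τ⁻¹(j)}, x_{τ⁻¹(j+1)}) * Y_τ(x)` whenever `s_j τ` has one more
inversion than `τ`. -/
def IsYBFamily {n : ℕ} {α : Type*} [LinearOrder α]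
    (Y : Equiv.Perm (Fin n) → (Fin n → α) → H n) : Prop :=
  (∀ x, Y 1 x = 1) ∧
  ∀ (j : ℕ) (h : j + 1 < n) (τ : Equiv.Perm (Fin n)) (x : Fin n → α),
    invnum (sw j h * τ) = invnum τ + 1 →
    Y (sw j h * τ) x =
      Ygen j h (x (τ⁻¹ ⟨j, by omega⟩)) (x (τ⁻¹ ⟨j + 1, h⟩)) * Y τ x

/-- `i` (0-indexed, `i+1 < n`) is a descent of the permutation `σ`. -/
def descPerm {n : ℕ} (σ : Equiv.Perm (Fin n)) (i : ℕ) : Prop :=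
  ∃ h : i + 1 < n, σ ⟨i + 1, h⟩ < σ ⟨i, by omega⟩

/-!
Write `σ = s_i π` with `ℓ(σ) = ℓ(π) + 1`, so that `Y_σ(x) = Y_i(x_{π⁻¹(i)}, x_{π⁻¹(i+1)}) Y_π(x)`;
the anti-automorphism `φ` reverses this product. The mirror recursion
`Y_{ρ s_j}(x) = Y_ρ(x ∘ s_j) Y_j(x_j, x_{j+1})` for `ℓ(ρ s_j) = ℓ(ρ) + 1` (proved by induction
on `ℓ(ρ)` from the defining one), applied to `ρ = π⁻¹` and the word `ω ∘ x ∘ σ⁻¹`, produces the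
factor `Y_i(ω x_{π⁻¹(i+1)}, ω x_{π⁻¹(i)})`, and this is `Y_i(x_{π⁻¹(i)}, x_{π⁻¹(i+1)})` because `ω`
reverses the order. Induction on `ℓ(σ)` thus gives `φ(Y_σ(x)) = Y_{σ⁻¹}(ω ∘ x ∘ σ⁻¹)` for every
word `x`, and for `x = τ` the word `ω ∘ τ ∘ σ⁻¹` is `‾τ^# (σ⁻¹)^#`.
-/

variable {n : ℕ}

lemma sw_inv {j : ℕ} (h : j + 1 < n) : (sw j h)⁻¹ = sw j h :=
  Equiv.swap_inv _ _

lemma sw_mul_sw_mul {j : ℕ} (h : j + 1 < n) (π : Equiv.Perm (Fin n)) :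
    sw j h * (sw j h * π) = π :=
  Equiv.swap_mul_self_mul _ _ _

@[simp]
lemma sw_apply_sw {j : ℕ} (h : j + 1 < n) (v : Fin n) : sw j h (sw j h v) = v :=
  Equiv.swap_apply_self _ _ _

@[simp]
lemma sw_apply_left {j : ℕ} (h : j + 1 < n) : sw j h ⟨j, by omega⟩ = ⟨j + 1, h⟩ :=
  Equiv.swap_apply_left _ _

@[simp]
lemma sw_apply_right {j : ℕ} (h : j + 1 < n) : sw j h ⟨j + 1, h⟩ = ⟨j, by omega⟩ :=
  Equiv.swap_apply_right _ _

lemma sw_lt_sw_iff {j : ℕ} (h : j + 1 < n) {u v : Fin n}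
    (huv : ¬(u = ⟨j, by omega⟩ ∧ v = ⟨j + 1, h⟩))
    (hvu : ¬(v = ⟨j, by omega⟩ ∧ u = ⟨j + 1, h⟩)) :
    sw j h u < sw j h v ↔ u < v := by
  simp only [sw, Equiv.swap_apply_def, Fin.ext_iff, Fin.lt_def, apply_ite Fin.val] at *
  split_ifs <;> omega

lemma invnum_inv (σ : Equiv.Perm (Fin n)) : invnum σ⁻¹ = invnum σ := by
  unfold invnum
  apply Finset.card_bij' (fun p _ => (σ⁻¹ p.2, σ⁻¹ p.1)) (fun p _ => (σ p.2, σ p.1)) <;>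
    simp +contextual

lemma invnum_sw_mul_of_lt {j : ℕ} (h : j + 1 < n) (π : Equiv.Perm (Fin n))
    (hπ : π⁻¹ ⟨j, by omega⟩ < π⁻¹ ⟨j + 1, h⟩) :
    invnum (sw j h * π) = invnum π + 1 := by
  set a := π⁻¹ ⟨j, by omega⟩
  set b := π⁻¹ ⟨j + 1, h⟩
  have hπa (u : Fin n) : π u = ⟨j, by omega⟩ ↔ u = a := Equiv.Perm.eq_inv_iff_eq.symm
  have hπb (u : Fin n) : π u = ⟨j + 1, h⟩ ↔ u = b := Equiv.Perm.eq_inv_iff_eq.symm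
  have hinv : (Finset.univ.filter fun p : Fin n × Fin n =>
        p.1 < p.2 ∧ (sw j h * π) p.2 < (sw j h * π) p.1) =
      insert (a, b) (Finset.univ.filter fun p : Fin n × Fin n => p.1 < p.2 ∧ π p.2 < π p.1) := by
    ext ⟨u, v⟩
    simp only [Finset.mem_filter, Finset.mem_insert, Finset.mem_univ, true_and, Prod.mk.injEq]
    simp only [Equiv.Perm.mul_apply]
    by_cases hab : u = a ∧ v = b
    · obtain ⟨rfl, rfl⟩ := hab
      simp only [and_self, true_or, iff_true]
      exact ⟨hπ, by simp [a, b]⟩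
    by_cases hba : u = b ∧ v = a
    · obtain ⟨rfl, rfl⟩ := hba
      simp [hπ.not_gt, hπ.ne']
    rw [sw_lt_sw_iff h (by rwa [hπa, hπb, and_comm]) (by rwa [hπa, hπb])]
    simp [hab]
  have hab : (a, b) ∉ Finset.univ.filter fun p : Fin n × Fin n => p.1 < p.2 ∧ π p.2 < π p.1 := by
    simp [a, b]
  rw [invnum, hinv, Finset.card_insert_of_notMem hab, invnum]

lemma invnum_sw_mul_eq_or {j : ℕ} (h : j + 1 < n) (π : Equiv.Perm (Fin n)) :
    invnum (sw j h * π) = invnum π + 1 ∨ invnum π = invnum (sw j h * π) + 1 := by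
  have hne : (⟨j, by omega⟩ : Fin n) ≠ ⟨j + 1, h⟩ := by simp
  rcases lt_or_gt_of_ne (π⁻¹.injective.ne hne) with hπ | hπ
  · exact .inl (invnum_sw_mul_of_lt h π hπ)
  · have hsπ : (sw j h * π)⁻¹ ⟨j, by omega⟩ < (sw j h * π)⁻¹ ⟨j + 1, h⟩ := by
      simpa [mul_inv_rev, sw_inv] using hπ
    simpa only [sw_mul_sw_mul] using Or.inr (invnum_sw_mul_of_lt h _ hsπ)

lemma invnum_mul_sw_eq_or {j : ℕ} (h : j + 1 < n) (π : Equiv.Perm (Fin n)) :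
    invnum (π * sw j h) = invnum π + 1 ∨ invnum π = invnum (π * sw j h) + 1 := by
  rw [← invnum_inv (π * sw j h), mul_inv_rev, sw_inv, ← invnum_inv π]
  exact invnum_sw_mul_eq_or h π⁻¹

lemma exists_descPerm_of_ne_one {σ : Equiv.Perm (Fin n)} (hσ : σ ≠ 1) : ∃ i, descPerm σ i := by
  by_contra! hnd
  have hmono : Monotone σ := by
    cases n with
    | zero => exact fun a => a.elim0
    | succ m => exact Fin.monotone_iff_le_succ.2 fun i => not_lt.1 fun hi => hnd i ⟨by omega, hi⟩
  exact hσ (Equiv.ext fun v => (hmono.strictMono_of_injective σ.injective).apply_eq)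

theorem induction_on_sw_mul {P : Equiv.Perm (Fin n) → Prop} (one : P 1)
    (sw_mul : ∀ (j : ℕ) (h : j + 1 < n) (π : Equiv.Perm (Fin n)),
      invnum (sw j h * π) = invnum π + 1 → P π → P (sw j h * π))
    (σ : Equiv.Perm (Fin n)) : P σ := by
  induction hσ : invnum σ using Nat.strong_induction_on generalizing σ with
  | _ m ih =>
  obtain rfl | hne := eq_or_ne σ 1
  · exact one
  obtain ⟨i, hi, hdesc⟩ := exists_descPerm_of_ne_one (inv_ne_one.2 hne)
  have hπ : (sw i hi * σ)⁻¹ ⟨i, by omega⟩ < (sw i hi * σ)⁻¹ ⟨i + 1, hi⟩ := by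
    simpa [mul_inv_rev, sw_inv] using hdesc
  have hlen := invnum_sw_mul_of_lt hi _ hπ
  rw [← sw_mul_sw_mul hi σ]
  exact sw_mul i hi _ hlen (ih _ (by rw [sw_mul_sw_mul] at hlen; omega) _ rfl)

lemma Ygen_reverse_args {α β : Type*} [LinearOrder α] [LinearOrder β] {r : α → β}
    (hr : ∀ a b, r a ≤ r b ↔ b ≤ a) {j : ℕ} (h : j + 1 < n) (t u : α) :
    Ygen j h (r u) (r t) = Ygen j h t u := by
  simp only [Ygen, hr]

lemma map_Ygen {φ : H n →ₐ[ℂ] (H n)ᵐᵒᵖ} (hφ : ∀ i, φ (Tgen i) = MulOpposite.op (Tgen i))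
    {α : Type*} [LinearOrder α] {j : ℕ} (h : j + 1 < n) (t u : α) :
    φ (Ygen j h t u) = MulOpposite.op (Ygen j h t u) := by
  unfold Ygen Tpos
  split_ifs <;> simp [hφ]

section YangBaxter

variable {α : Type*} [LinearOrder α] {Y : Equiv.Perm (Fin n) → (Fin n → α) → H n}

theorem IsYBFamily.mul_sw (hY : IsYBFamily Y) {j : ℕ} (h : j + 1 < n) (ρ : Equiv.Perm (Fin n))
    (x : Fin n → α) (hρ : invnum (ρ * sw j h) = invnum ρ + 1) :
    Y (ρ * sw j h) x = Y ρ (x ∘ sw j h) * Ygen j h (x ⟨j, by omega⟩) (x ⟨j + 1, h⟩) := by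
  induction ρ using induction_on_sw_mul generalizing x with
  | one =>
    have hsw := hY.2 j h 1 x (by simpa using hρ)
    simp only [one_mul, mul_one, inv_one, Equiv.Perm.coe_one, id] at hsw ⊢
    rw [hsw, hY.1, hY.1, one_mul, mul_one]
  | sw_mul i hi π hπ ih =>
    rw [mul_assoc] at hρ ⊢
    -- `ℓ(s_i π s_j) = ℓ(π) + 2`, and each factor `s_i`, `s_j` changes the length by exactly one.
    have hπsw : invnum (π * sw j h) = invnum π + 1 := by
      rcases invnum_sw_mul_eq_or hi (π * sw j h) with h1 | h1 <;>
        rcases invnum_mul_sw_eq_or h π with h2 | h2 <;> omega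
    rw [hY.2 i hi _ x (by omega), ih x hπsw, hY.2 i hi π _ hπ, mul_assoc, mul_inv_rev, sw_inv]
    rfl

theorem IsYBFamily.map_antiHom (hY : IsYBFamily Y) {φ : H n →ₐ[ℂ] (H n)ᵐᵒᵖ}
    (hφ : ∀ i, φ (Tgen i) = MulOpposite.op (Tgen i)) {r : α → α}
    (hr : ∀ a b, r a ≤ r b ↔ b ≤ a) (σ : Equiv.Perm (Fin n)) (x : Fin n → α) :
    φ (Y σ x) = MulOpposite.op (Y σ⁻¹ (r ∘ x ∘ ⇑(σ⁻¹))) := by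
  induction σ using induction_on_sw_mul generalizing x with
  | one => simp [hY.1]
  | sw_mul i hi π hπ ih =>
    have hπinv : invnum (π⁻¹ * sw i hi) = invnum π⁻¹ + 1 := by
      rw [← invnum_inv, mul_inv_rev, sw_inv, inv_inv, hπ, invnum_inv]
    rw [hY.2 i hi π x hπ, map_mul, map_Ygen hφ, ih, mul_inv_rev, sw_inv, hY.mul_sw hi _ _ hπinv,
      ← MulOpposite.op_mul]
    congr 2
    · congr 1
      ext v
      simp
    · simp [Ygen_reverse_args hr]

end YangBaxter

theorem antiAutomorphism_of_yangBaxter (n : ℕ)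
    (Y : Equiv.Perm (Fin n) → (Fin n → Fin n) → H n) (hY : IsYBFamily Y)
    (φ : H n →ₐ[ℂ] (H n)ᵐᵒᵖ) (hφ : ∀ i, φ (Tgen i) = MulOpposite.op (Tgen i))
    (σ τ : Equiv.Perm (Fin n)) :
    φ (Y σ ⇑τ) =
      MulOpposite.op
        (Y σ⁻¹ ⇑(((Fin.revPerm * (τ * Fin.revPerm)) * (Fin.revPerm * σ⁻¹) : Equiv.Perm (Fin n)))) := by
  have hword : ⇑((Fin.revPerm * (τ * Fin.revPerm)) * (Fin.revPerm * σ⁻¹) : Equiv.Perm (Fin n)) =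
      Fin.rev ∘ ⇑τ ∘ ⇑(σ⁻¹) := by
    ext v
    simp
  rw [hword]
  exact hY.map_antiHom hφ (fun _ _ => Fin.rev_le_rev) σ τ

end

end AKSPaper
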